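/- arXiv:1304.6744 — 2 statements merged into one kernel-verified Lean document; each statement's English description precedes it below -/
import Mathlib

section
/- Let U_n^σ be the rescaled Chebyshev polynomials of the second kind on [−2√2σ, 2√2σ], U_n^σ(x) = Σ_{k=0}^{⌊n/2⌋} (−1)^k binom(n−k, k) (x/(√2σ))^{n−2k}. Then with respect to the bilinear form ⟨·,·⟩ determined on polynomials by ⟨x^l, x^m⟩ = (√2σ)^{l+m} C_{l,m}, the Chebyshev polynomials are orthogonal: ⟨U_n^σ, U_m^σ⟩ = δ_{nm} γ_n for all n, m ≥ 0. -/
open Finset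
open scoped BigOperators


noncomputable section

/-- `γ_k = (1/π) ∫ (sin x / x)^{k+1} dx`. -/
def γfun (k : ℕ) : ℝ := (1 / Real.pi) * ∫ x : ℝ, (Real.sin x / x) ^ (k + 1)

/-- The coefficients `C_{l,m}` for `l ≤ m`. -/
def CformAux (l m : ℕ) : ℝ :=
  if (l + m) % 2 = 1 then 0
  else if l % 2 = 0 then
    (((l : ℝ) + 1) * ((m : ℝ) + 1))⁻¹ * ∑ k ∈ Finset.range (l / 2 + 1),
      ((2 * (k : ℝ) + 1) ^ 2) * (Nat.choose (l + 1) ((l - 2 * k) / 2) : ℝ) *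
        (Nat.choose (m + 1) ((m - 2 * k) / 2) : ℝ) * γfun (2 * k)
  else
    (((l : ℝ) + 1) * ((m : ℝ) + 1))⁻¹ * ∑ k ∈ Finset.range ((l - 1) / 2 + 1),
      ((2 * (k : ℝ) + 2) ^ 2) * (Nat.choose (l + 1) ((l - 2 * k - 1) / 2) : ℝ) *
        (Nat.choose (m + 1) ((m - 2 * k - 1) / 2) : ℝ) * γfun (2 * k + 1)

/-- The coefficients `C_{l,m}`, extended symmetrically. -/
def Cform (l m : ℕ) : ℝ := if l ≤ m then CformAux l m else CformAux m l

end

noncomputable section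

/-- The bilinear form on polynomials determined by `⟨x^i, x^j⟩ = (√2σ)^{i+j} C_{i,j}`. -/
def polyBil (σ : ℝ) (p q : Polynomial ℝ) : ℝ :=
  p.sum fun i a => q.sum fun j c => a * c * (Real.sqrt 2 * σ) ^ (i + j) * Cform i j

/-- The rescaled Chebyshev polynomial of the second kind on `[-2√2σ, 2√2σ]`:
`U_n^σ(x) = Σ_{k=0}^{⌊n/2⌋} (-1)^k binom(n-k,k) (x/(√2σ))^{n-2k}`. -/
def chebPoly (σ : ℝ) (n : ℕ) : Polynomial ℝ :=
  ∑ k ∈ Finset.range (n / 2 + 1),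
    Polynomial.C ((-1 : ℝ) ^ k * (Nat.choose (n - k) k : ℝ) *
      ((Real.sqrt 2 * σ)⁻¹) ^ (n - 2 * k)) * Polynomial.X ^ (n - 2 * k)

end

/-!
Let `U_j` be the Chebyshev polynomials of the second kind on `[-2, 2]`, so that
`U_n^σ(x) = U_n(x / (√2σ))` and `U_n = Σ_k (-1)^k C(n-k, k) x^(n-2k)`. Inverting this triangular
system gives `x^l = Σ_j A_{l,j} U_j` with the ballot numbers
`A_{l,j} = C(l,t) - C(l,t-1) = (j+1)/(l+1) · C(l+1, t)` for `j = l - 2t`, and the defining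
formula of `C_{l,m}` is exactly `C_{l,m} = Σ_j A_{l,j} A_{m,j} γ_j`. Once the rescaling
cancels the powers of `√2σ`, the form reads `⟨p, q⟩ = Σ_j a_j(p) a_j(q) γ_j`, where `a_j` is
the `U_j`-coordinate, and `a_j(U_n^σ) = δ_{jn}`.

That the two triangular matrices are inverse telescopes to `Σ_k (-1)^k C(t,k) C(n-k,t) = 1`,
the coefficient of `X^t` in `Σ_k (-1)^k C(t,k) (X+1)^(n-k) = ((X+1) - 1)^t (X+1)^(n-t)`.
-/

open Polynomial

theorem sum_range_eq_sum_range_two_mul_add {M : Type*} [AddCommMonoid M] {f : ℕ → M}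
    {N s r : ℕ} (hN : 2 * s + r < N) (hf : ∀ j, f j ≠ 0 → ∃ k ≤ s, 2 * k + r = j) :
    ∑ j ∈ range N, f j = ∑ k ∈ range (s + 1), f (2 * k + r) := by
  rw [← sum_image (g := fun k => 2 * k + r) fun a _ b _ h => by simpa using h]
  refine (sum_subset (fun j hj => ?_) fun j _ hj => ?_).symm
  · obtain ⟨k, hk, rfl⟩ := mem_image.mp hj
    have := mem_range_succ_iff.mp hk
    exact mem_range.mpr (by omega)
  · by_contra hne
    obtain ⟨k, hk, rfl⟩ := hf j hne
    exact hj (mem_image.mpr ⟨k, mem_range_succ_iff.mpr hk, rfl⟩)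

theorem sum_range_neg_one_pow_mul_choose_mul_choose {R : Type*} [CommRing R] {n t : ℕ}
    (h : t ≤ n) : ∑ k ∈ range (t + 1), (-1 : R) ^ k * t.choose k * (n - k).choose t = 1 := by
  have hbinom : (X : R[X]) ^ t =
      ∑ k ∈ range (t + 1), C ((-1 : R) ^ k * t.choose k) * (X + 1) ^ (t - k) := by
    rw [show (X : R[X]) = -1 + (X + 1) by ring, add_pow]
    refine sum_congr rfl fun k _ => ?_
    simp only [map_mul, map_pow, map_neg, map_one, map_natCast]
    ring
  have hX : ∑ k ∈ range (t + 1), C ((-1 : R) ^ k * t.choose k) * (X + 1) ^ (n - k)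
      = X ^ t * (X + 1) ^ (n - t) := by
    rw [hbinom, sum_mul]
    refine sum_congr rfl fun k hk => ?_
    rw [mul_assoc, ← pow_add, Nat.add_comm (t - k),
      Nat.sub_add_sub_cancel h (mem_range_succ_iff.mp hk)]
  simpa only [finsetSum_coeff, coeff_C_mul, coeff_X_add_one_pow, coeff_X_pow_mul', le_refl,
    if_true, Nat.sub_self, Nat.choose_zero_right, Nat.cast_one] using congrArg (coeff · t) hX

noncomputable def chebCoeff (n k : ℕ) : ℝ := (-1) ^ k * (n - k).choose k

theorem sum_range_chebCoeff_mul_choose {n t : ℕ} (h : t ≤ n) :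
    ∑ k ∈ range (t + 1), chebCoeff n k * (n - 2 * k).choose (t - k) = 1 := by
  rw [← sum_range_neg_one_pow_mul_choose_mul_choose (R := ℝ) h]
  refine sum_congr rfl fun k hk => ?_
  have hchoose := Nat.choose_mul (n := n - k) (mem_range_succ_iff.mp hk)
  rw [Nat.sub_sub, ← two_mul] at hchoose
  rw [chebCoeff, mul_assoc, ← Nat.cast_mul, ← hchoose]
  push_cast
  ring

noncomputable def ballot (l : ℕ) : ℕ → ℝ
  | 0 => 1
  | t + 1 => l.choose (t + 1) - l.choose t

theorem ballot_eq {l t : ℕ} (h : t ≤ l) :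
    ballot l t = ((l : ℝ) - 2 * t + 1) / (l + 1) * (l + 1).choose t := by
  rw [div_mul_eq_mul_div, eq_div_iff (by positivity)]
  cases t with
  | zero => simp [ballot]
  | succ s =>
    have hpascal : ((l + 1).choose (s + 1) : ℝ) = l.choose s + l.choose (s + 1) := by
      exact_mod_cast Nat.choose_succ_succ l s
    have hratio : (l.choose (s + 1) : ℝ) * (s + 1) = l.choose s * (l - s) := by
      rw [← Nat.cast_sub (by omega), ← Nat.cast_succ, ← Nat.cast_mul, ← Nat.cast_mul,
        Nat.choose_succ_right_eq]
    simp only [ballot]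
    push_cast
    linear_combination (2 * (s : ℝ) + 1 - l) * hpascal + 2 * hratio

/-- The coefficient of `U_j` in the expansion of `x ^ l` in Chebyshev polynomials of the second
kind on `[-2, 2]`. -/
noncomputable def monomialChebCoeff (l j : ℕ) : ℝ :=
  if j ≤ l ∧ (l - j) % 2 = 0 then ballot l ((l - j) / 2) else 0

theorem monomialChebCoeff_eq_zero {l j : ℕ} (h : ¬(j ≤ l ∧ (l - j) % 2 = 0)) :
    monomialChebCoeff l j = 0 :=
  if_neg h

theorem monomialChebCoeff_sub_two_mul {l t : ℕ} (h : 2 * t ≤ l) :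
    monomialChebCoeff l (l - 2 * t) = ballot l t := by
  rw [monomialChebCoeff, if_pos (by omega), show (l - (l - 2 * t)) / 2 = t by omega]

theorem monomialChebCoeff_eq {l j : ℕ} (hj : j ≤ l) (hpar : (l - j) % 2 = 0) :
    monomialChebCoeff l j = (j + 1) / (l + 1) * (l + 1).choose ((l - j) / 2) := by
  rw [monomialChebCoeff, if_pos ⟨hj, hpar⟩, ballot_eq (by omega)]
  congr 2
  have h2 : ((2 * ((l - j) / 2) : ℕ) : ℝ) = l - j := by
    rw [← Nat.cast_sub hj]
    congr 1
    omega
  push_cast at h2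
  linarith

theorem sum_range_chebCoeff_mul_ballot {n t : ℕ} (h : t ≤ n) :
    ∑ k ∈ range (t + 1), chebCoeff n k * ballot (n - 2 * k) (t - k) =
      if t = 0 then 1 else 0 := by
  cases t with
  | zero => simp [chebCoeff, ballot]
  | succ s =>
    have hcur := sum_range_chebCoeff_mul_choose h
    have hprev := sum_range_chebCoeff_mul_choose (by omega : s ≤ n)
    have hsplit : ∀ k ∈ range (s + 1), chebCoeff n k * ballot (n - 2 * k) (s + 1 - k) =
        chebCoeff n k * (n - 2 * k).choose (s + 1 - k) -
          chebCoeff n k * (n - 2 * k).choose (s - k) := by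
      intro k hk
      rw [show s + 1 - k = s - k + 1 by have := mem_range_succ_iff.mp hk; omega, ballot, mul_sub]
    rw [sum_range_succ, sum_congr rfl hsplit, sum_sub_distrib, hprev]
    rw [sum_range_succ _ (s + 1)] at hcur
    simp only [Nat.sub_self, ballot, Nat.choose_zero_right, Nat.cast_one,
      if_neg (Nat.succ_ne_zero s)] at hcur ⊢
    linarith

theorem sum_chebCoeff_mul_monomialChebCoeff (n j : ℕ) :
    ∑ k ∈ range (n / 2 + 1), chebCoeff n k * monomialChebCoeff (n - 2 * k) j =
      if j = n then 1 else 0 := by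
  by_cases hj : j ≤ n ∧ (n - j) % 2 = 0
  · obtain ⟨t, ht, rfl⟩ : ∃ t, 2 * t ≤ n ∧ j = n - 2 * t :=
      ⟨(n - j) / 2, by omega, by omega⟩
    have hrestrict :
        ∑ k ∈ range (n / 2 + 1), chebCoeff n k * monomialChebCoeff (n - 2 * k) (n - 2 * t) =
          ∑ k ∈ range (t + 1), chebCoeff n k * ballot (n - 2 * k) (t - k) := by
      symm
      refine sum_subset_zero_on_sdiff (range_subset_range.mpr (by omega)) (fun k hk => ?_)
        fun k hk => ?_
      · simp only [mem_sdiff, mem_range] at hk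
        rw [monomialChebCoeff_eq_zero (by omega), mul_zero]
      · have hkt := mem_range_succ_iff.mp hk
        rw [show n - 2 * t = n - 2 * k - 2 * (t - k) by omega,
          monomialChebCoeff_sub_two_mul (by omega)]
    rw [hrestrict, sum_range_chebCoeff_mul_ballot (by omega)]
    exact if_congr (by omega) rfl rfl
  · rw [if_neg (by omega)]
    refine sum_eq_zero fun k hk => ?_
    have hkn := mem_range_succ_iff.mp hk
    rw [monomialChebCoeff_eq_zero (by omega), mul_zero]

theorem monomialChebCoeff_ne_zero {l j : ℕ} (h : monomialChebCoeff l j ≠ 0) :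
    j ≤ l ∧ (l - j) % 2 = 0 := by
  by_contra hlj
  exact h (monomialChebCoeff_eq_zero hlj)

theorem monomialChebCoeff_mul_monomialChebCoeff {l m j : ℕ} (hl : j ≤ l) (hm : j ≤ m)
    (hlpar : (l - j) % 2 = 0) (hmpar : (m - j) % 2 = 0) :
    monomialChebCoeff l j * monomialChebCoeff m j = (((l : ℝ) + 1) * ((m : ℝ) + 1))⁻¹ *
      ((j + 1) ^ 2 * (l + 1).choose ((l - j) / 2) * (m + 1).choose ((m - j) / 2)) := by
  rw [monomialChebCoeff_eq hl hlpar, monomialChebCoeff_eq hm hmpar]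
  field_simp

theorem CformAux_eq_sum {l m N : ℕ} (hlm : l ≤ m) (hm : m < N) :
    CformAux l m = ∑ j ∈ range N, monomialChebCoeff l j * monomialChebCoeff m j * γfun j := by
  have hsupp : ∀ j, monomialChebCoeff l j * monomialChebCoeff m j * γfun j ≠ 0 →
      j ≤ l ∧ (l - j) % 2 = 0 ∧ (m - j) % 2 = 0 := fun j hj => by
    obtain ⟨hl, hm⟩ := mul_ne_zero_iff.mp (left_ne_zero_of_mul hj)
    exact ⟨(monomialChebCoeff_ne_zero hl).1, (monomialChebCoeff_ne_zero hl).2,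
      (monomialChebCoeff_ne_zero hm).2⟩
  by_cases hpar : (l + m) % 2 = 1
  · rw [CformAux, if_pos hpar]
    refine (sum_eq_zero fun j _ => ?_).symm
    by_contra hj
    have := hsupp j hj
    omega
  rw [sum_range_eq_sum_range_two_mul_add (s := l / 2) (r := l % 2) (by omega)
    fun j hj => ⟨j / 2, by have := hsupp j hj; omega⟩, CformAux, if_neg hpar]
  rcases Nat.mod_two_eq_zero_or_one l with hl | hl
  · rw [if_pos hl, mul_sum]
    refine sum_congr rfl fun k hk => ?_
    have := mem_range_succ_iff.mp hk
    rw [hl, add_zero,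
      monomialChebCoeff_mul_monomialChebCoeff (by omega) (by omega) (by omega) (by omega)]
    push_cast
    ring
  · rw [if_neg (by omega), show (l - 1) / 2 = l / 2 by omega, mul_sum]
    refine sum_congr rfl fun k hk => ?_
    have := mem_range_succ_iff.mp hk
    rw [hl, monomialChebCoeff_mul_monomialChebCoeff (by omega) (by omega) (by omega) (by omega)]
    simp only [Nat.sub_sub]
    push_cast
    ring

theorem Cform_eq_sum {l m N : ℕ} (hl : l < N) (hm : m < N) :
    Cform l m = ∑ j ∈ range N, monomialChebCoeff l j * monomialChebCoeff m j * γfun j := by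
  rw [Cform]
  split_ifs with hlm
  · exact CformAux_eq_sum hlm hm
  · simp only [CformAux_eq_sum (le_of_not_ge hlm) hl, mul_comm (monomialChebCoeff m _)]

section polyBil

variable (σ : ℝ)

theorem polyBil_add_left (p p' q : ℝ[X]) :
    polyBil σ (p + p') q = polyBil σ p q + polyBil σ p' q :=
  sum_add_index p p' _ (fun _ => by simp [Polynomial.sum_def]) fun _ _ _ => by
    simp only [add_mul, Polynomial.sum_add]

theorem polyBil_add_right (p q q' : ℝ[X]) :
    polyBil σ p (q + q') = polyBil σ p q + polyBil σ p q' := by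
  simp only [polyBil, ← Polynomial.sum_add]
  exact congrArg p.sum <| funext₂ fun i a => sum_add_index q q' _ (fun _ => by simp)
    fun _ _ _ => by ring

theorem polyBil_sum_left {ι : Type*} (s : Finset ι) (p : ι → ℝ[X]) (q : ℝ[X]) :
    polyBil σ (∑ i ∈ s, p i) q = ∑ i ∈ s, polyBil σ (p i) q :=
  map_sum (AddMonoidHom.mk' (polyBil σ · q) fun p p' => polyBil_add_left σ p p' q) p s

theorem polyBil_sum_right {ι : Type*} (p : ℝ[X]) (s : Finset ι) (q : ι → ℝ[X]) :
    polyBil σ p (∑ i ∈ s, q i) = ∑ i ∈ s, polyBil σ p (q i) :=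
  map_sum (AddMonoidHom.mk' (polyBil σ p) (polyBil_add_right σ p)) q s

theorem polyBil_monomial_monomial (i j : ℕ) (a b : ℝ) :
    polyBil σ (monomial i a) (monomial j b) = a * b * (√2 * σ) ^ (i + j) * Cform i j := by
  rw [polyBil, sum_monomial_index _ _ (by simp), sum_monomial_index _ _ (by simp)]

end polyBil

theorem chebPoly_eq_sum_monomial (σ : ℝ) (n : ℕ) :
    chebPoly σ n = ∑ k ∈ range (n / 2 + 1),
      monomial (n - 2 * k) (chebCoeff n k * (√2 * σ)⁻¹ ^ (n - 2 * k)) :=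
  sum_congr rfl fun _ _ => C_mul_X_pow_eq_monomial

theorem polyBil_chebPoly {σ : ℝ} (hσ : σ ≠ 0) (n m : ℕ) :
    polyBil σ (chebPoly σ n) (chebPoly σ m) =
      ∑ k ∈ range (n / 2 + 1), ∑ k' ∈ range (m / 2 + 1),
        chebCoeff n k * chebCoeff m k' * Cform (n - 2 * k) (m - 2 * k') := by
  rw [chebPoly_eq_sum_monomial, chebPoly_eq_sum_monomial, polyBil_sum_left]
  simp only [polyBil_sum_right, polyBil_monomial_monomial]
  refine sum_congr rfl fun k _ => sum_congr rfl fun k' _ => ?_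
  have hw : √2 * σ ≠ 0 := mul_ne_zero (by positivity) hσ
  rw [pow_add, inv_pow, inv_pow]
  field_simp

/-- **Lemma 3.5** (Li–Soshnikov). The rescaled Chebyshev polynomials of the second kind are
orthogonal with respect to the bilinear form `⟨x^l, x^m⟩ = (√2σ)^{l+m} C_{l,m}`:
`⟨U_n^σ, U_m^σ⟩ = δ_{nm} γ_n`. -/
theorem chebyshev_orthogonal_bilinear (σ : ℝ) (hσ : 0 < σ) :
    ∀ n m : ℕ, polyBil σ (chebPoly σ n) (chebPoly σ m) = if n = m then γfun n else 0 := by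
  intro n m
  calc polyBil σ (chebPoly σ n) (chebPoly σ m)
      = ∑ k ∈ range (n / 2 + 1), ∑ k' ∈ range (m / 2 + 1), chebCoeff n k * chebCoeff m k' *
          ∑ j ∈ range (n + m + 1),
            monomialChebCoeff (n - 2 * k) j * monomialChebCoeff (m - 2 * k') j * γfun j := by
        rw [polyBil_chebPoly hσ.ne']
        exact sum_congr rfl fun k _ => sum_congr rfl fun k' _ => by
          rw [Cform_eq_sum (N := n + m + 1) (by omega) (by omega)]
    _ = ∑ j ∈ range (n + m + 1),
          (∑ k ∈ range (n / 2 + 1), chebCoeff n k * monomialChebCoeff (n - 2 * k) j) *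
          (∑ k' ∈ range (m / 2 + 1), chebCoeff m k' * monomialChebCoeff (m - 2 * k') j) *
            γfun j := by
        simp_rw [sum_mul_sum, sum_mul, mul_sum]
        rw [sum_congr rfl fun k _ => sum_comm, sum_comm]
        exact sum_congr rfl fun j _ => sum_congr rfl fun k _ => sum_congr rfl fun k' _ => by ring
    _ = if n = m then γfun n else 0 := by
        simp only [sum_chebCoeff_mul_monomialChebCoeff, ite_mul, one_mul, zero_mul]
        simp [eq_comm]
end

section
/- For nonnegative integers n and t with 0 ≤ t ≤ n, define G₁(n,t) = Σ_{k=0}^{n−t} (−1)^k (2n−k)! / (k! (n−k−t)! (n−k+t+1)!) and G₂(n,t) = Σ_{k=0}^{n−t} (−1)^k (2n+1−k)! / (k! (n−k−t)! (n−k+t+2)!). Then G₁(n,t) = 0 and G₂(n,t) = 0 for every t with 0 ≤ t ≤ n−1, while G₁(n,n) = 1/(2n+1) and G₂(n,n) = 1/(2n+2). -/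
/-!
After substituting `m = n - t`, both sums have the shape
`∑_{k ≤ m} (-1)^k (N-k)! / (k! (m-k)! (N-k-r)!)` with `r = m - 1` and `N = 2n` resp. `2n+1`.
Up to the factor `1/m!` this is `∑_{k ≤ m} (-1)^k C(m,k) p(k)` for the polynomial
`p(x) = (N-x)(N-x-1)⋯(N-x-r+1)` of degree `r < m`, i.e. `±` the `m`-th forward difference of `p`
at `0`, which vanishes. For `t = n` the sums have a single term.
-/

open Finset
open scoped BigOperators

/-- `G₁(n,t) = Σ_{k=0}^{n-t} (-1)^k (2n-k)! / (k! (n-k-t)! (n-k+t+1)!)`. -/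
def Gone (n t : ℕ) : ℚ :=
  ∑ k ∈ Finset.range (n - t + 1),
    (-1 : ℚ) ^ k * (Nat.factorial (2 * n - k) : ℚ) /
      ((Nat.factorial k : ℚ) * (Nat.factorial (n - k - t) : ℚ) *
        (Nat.factorial (n - k + t + 1) : ℚ))

/-- `G₂(n,t) = Σ_{k=0}^{n-t} (-1)^k (2n+1-k)! / (k! (n-k-t)! (n-k+t+2)!)`. -/
def Gtwo (n t : ℕ) : ℚ :=
  ∑ k ∈ Finset.range (n - t + 1),
    (-1 : ℚ) ^ k * (Nat.factorial (2 * n + 1 - k) : ℚ) /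
      ((Nat.factorial k : ℚ) * (Nat.factorial (n - k - t) : ℚ) *
        (Nat.factorial (n - k + t + 2) : ℚ))

open Polynomial
open scoped Nat fwdDiff

theorem Polynomial.sum_range_neg_one_pow_mul_choose_mul_eval_eq_zero {R : Type*} [CommRing R]
    {P : R[X]} {m : ℕ} (hP : P.natDegree < m) :
    ∑ k ∈ range (m + 1), (-1 : R) ^ k * m.choose k * P.eval (k : R) = 0 := by
  have hΔ := congr_fun (fwdDiff_iter_eq_zero_of_degree_lt hP) 0
  rw [fwdDiff_iter_eq_sum_shift] at hΔ
  -- Newton's formula carries the sign `(-1)^(m-k)`; multiplying by `(-1)^m` turns it into `(-1)^k`.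
  have hsign : ∀ k ∈ range (m + 1), (-1 : R) ^ m * (((-1 : ℤ) ^ (m - k) * m.choose k) •
      P.eval (0 + k • (1 : R))) = (-1 : R) ^ k * m.choose k * P.eval (k : R) := by
    intro k hk
    obtain ⟨j, rfl⟩ := Nat.exists_eq_add_of_le (Nat.lt_succ_iff.mp (mem_range.mp hk))
    have hj : (-1 : R) ^ j * (-1) ^ j = 1 := by rw [← mul_pow]; simp
    rw [Nat.add_sub_cancel_left, zsmul_eq_mul, pow_add, zero_add, nsmul_one]
    push_cast
    linear_combination (-1 : R) ^ k * (k + j).choose k * P.eval (k : R) * hj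
  rw [← sum_congr rfl hsign, ← mul_sum, hΔ, Pi.zero_apply, mul_zero]

theorem descPochhammer_comp_C_sub_X_eval_natCast {R : Type*} [CommRing R] {N k : ℕ} (h : k ≤ N)
    (r : ℕ) :
    ((descPochhammer R r).comp (C (N : R) - X)).eval (k : R) = (N - k).descFactorial r := by
  rw [eval_comp, ← descPochhammer_eval_eq_descFactorial, Nat.cast_sub h]
  simp

theorem sum_range_neg_one_pow_mul_factorial_div_eq_zero {K : Type*} [Field K] [CharZero K]
    {m r N : ℕ} (hrm : r < m) (hN : m + r ≤ N) :
    ∑ k ∈ range (m + 1), (-1 : K) ^ k * ((N - k)! : K) /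
      ((k ! : K) * ((m - k)! : K) * ((N - k - r)! : K)) = 0 := by
  set P : K[X] := (descPochhammer K r).comp (C (N : K) - X)
  have hP : P.natDegree < m := calc
    P.natDegree ≤ (descPochhammer K r).natDegree * (C (N : K) - X).natDegree := natDegree_comp_le
    _ ≤ r * 1 := by
      rw [descPochhammer_natDegree]
      exact Nat.mul_le_mul_left r (natDegree_sub_le_of_le (natDegree_C _).le natDegree_X_le)
    _ < m := by rwa [mul_one]
  have hterm : ∀ k ∈ range (m + 1), (-1 : K) ^ k * ((N - k)! : K) /
      ((k ! : K) * ((m - k)! : K) * ((N - k - r)! : K)) =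
      (m ! : K)⁻¹ * ((-1) ^ k * m.choose k * P.eval (k : K)) := by
    intro k hk
    have hkm : k ≤ m := Nat.lt_succ_iff.mp (mem_range.mp hk)
    rw [descPochhammer_comp_C_sub_X_eval_natCast (by omega), Nat.cast_choose K hkm,
      ← Nat.factorial_mul_descFactorial (by omega : r ≤ N - k), Nat.cast_mul]
    field_simp [Nat.factorial_ne_zero]
  rw [sum_congr rfl hterm, ← mul_sum, sum_range_neg_one_pow_mul_choose_mul_eval_eq_zero hP,
    mul_zero]

/-- The Chu–Vandermonde evaluations (3.44)–(3.47) (Li–Soshnikov): `G₁(n,t) = G₂(n,t) = 0`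
for `0 ≤ t ≤ n-1`, while `G₁(n,n) = 1/(2n+1)` and `G₂(n,n) = 1/(2n+2)`. -/
theorem Gone_Gtwo_eval (n : ℕ) :
    (∀ t : ℕ, t < n → Gone n t = 0 ∧ Gtwo n t = 0) ∧
    Gone n n = 1 / (2 * (n : ℚ) + 1) ∧ Gtwo n n = 1 / (2 * (n : ℚ) + 2) := by
  refine ⟨fun t ht => ⟨?_, ?_⟩, ?_, ?_⟩
  · rw [Gone, ← sum_range_neg_one_pow_mul_factorial_div_eq_zero (m := n - t) (r := n - t - 1)
      (N := 2 * n) (by omega) (by omega)]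
    refine sum_congr rfl fun k hk => ?_
    have hkm := mem_range.mp hk
    rw [show n - k - t = n - t - k by omega,
      show n - k + t + 1 = 2 * n - k - (n - t - 1) by omega]
  · rw [Gtwo, ← sum_range_neg_one_pow_mul_factorial_div_eq_zero (m := n - t) (r := n - t - 1)
      (N := 2 * n + 1) (by omega) (by omega)]
    refine sum_congr rfl fun k hk => ?_
    have hkm := mem_range.mp hk
    rw [show n - k - t = n - t - k by omega,
      show n - k + t + 2 = 2 * n + 1 - k - (n - t - 1) by omega]
  · have hG : Gone n n = (2 * n)! / (2 * n + 1)! := by simp [Gone, two_mul]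
    rw [hG, Nat.factorial_succ]
    push_cast
    field_simp
  · have hG : Gtwo n n = (2 * n + 1)! / (2 * n + 2)! := by simp [Gtwo, two_mul]
    rw [hG, Nat.factorial_succ (2 * n + 1)]
    push_cast
    field_simp
    ring
end
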